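/- arXiv:1403.3831 — 2 statements merged into one kernel-verified Lean document; each statement's English description precedes it below -/
import Mathlib

section
/- Let (M, ρ) be a metric space admitting a minimal spanning tree. Then for every partition M = M₁' ⊔ M₂' into nonempty sets with ρ(M₁', M₂') > 0, the distance between M₁' and M₂' is attained: there exist v₁ ∈ M₁', v₂ ∈ M₂' with ρ(v₁, v₂) = ρ(M₁', M₂'). -/
/-!
Every tree edge `uv` crossing the partition has length at least `ρ(M₁, M₂) > 0`; since the
minimal spanning tree `T` has finite length, there are only finitely many such edges, so a
shortest one exists. Conversely, for `a ∈ M₁`, `b ∈ M₂` the tree path from `a` to `b` contains a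
crossing edge `uv`, and exchanging `uv` for `ab` gives another spanning tree, so minimality of `T`
forces `ρ(u, v) ≤ ρ(a, b)`. Hence the shortest crossing edge realises `ρ(M₁, M₂)`.
-/

open scoped ENNReal

namespace MSTPaper

variable {M : Type*}

/-- The length of an edge `e` of a graph on a metric space: the extended
distance between its endpoints. -/
noncomputable def edgeLen [MetricSpace M] (e : Sym2 M) : ℝ≥0∞ :=
  Sym2.lift ⟨fun x y => edist x y, fun x y => edist_comm x y⟩ e

/-- The length of a graph: the (possibly infinite) sum of the lengths of its edges. -/
noncomputable def graphLen [MetricSpace M] (G : SimpleGraph M) : ℝ≥0∞ :=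
  ∑' e : G.edgeSet, edgeLen (e : Sym2 M)

/-- The distance between two subsets of a metric space. -/
noncomputable def setDist [MetricSpace M] (A B : Set M) : ℝ≥0∞ :=
  ⨅ x ∈ A, ⨅ y ∈ B, edist x y

/-- A minimal spanning tree on the metric space `M`: a spanning tree of finite
length whose length equals the infimum of lengths of all spanning trees on `M`. -/
def IsMST [MetricSpace M] (T : SimpleGraph M) : Prop :=
  T.IsTree ∧ graphLen T < ⊤ ∧ ∀ T' : SimpleGraph M, T'.IsTree → graphLen T ≤ graphLen T'

/-- An edge `uv` of `G` is exact if its length equals the distance between the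
two connected components obtained by removing it. -/
def ExactEdge [MetricSpace M] (G : SimpleGraph M) (u v : M) : Prop :=
  edist u v = setDist {x | (G.deleteEdges {s(u,v)}).Reachable u x}
                      {x | (G.deleteEdges {s(u,v)}).Reachable v x}

end MSTPaper

namespace SimpleGraph

variable {V : Type*} {G T : SimpleGraph V} {u v a b : V}

theorem Reachable.deleteEdges_reachable_or {x : V} (h : G.Reachable x u) :
    (G.deleteEdges {s(u, v)}).Reachable x u ∨ (G.deleteEdges {s(u, v)}).Reachable x v := by
  obtain ⟨w⟩ := h
  induction w with
  | nil => exact .inl .rfl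
  | @cons x z u hxz _ ih =>
    by_cases he : s(x, z) = s(u, v)
    · rcases Sym2.eq_iff.mp he with ⟨rfl, -⟩ | ⟨rfl, -⟩
      · exact .inl .rfl
      · exact .inr .rfl
    · have hD : (G.deleteEdges {s(u, v)}).Adj x z := by simpa [he] using hxz
      exact ih.imp hD.reachable.trans hD.reachable.trans

theorem IsAcyclic.not_reachable_deleteEdges_of_mem_edges (hT : T.IsAcyclic) {p : T.Walk a b}
    (hp : p.IsPath) (he : s(u, v) ∈ p.edges) : ¬(T.deleteEdges {s(u, v)}).Reachable a b := by
  classical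
  rw [reachable_deleteEdges_iff_exists_walk]
  rintro ⟨q, hq⟩
  have : (⟨p, hp⟩ : T.Path a b) = q.toPath := (hT.subsingleton_path a b).elim _ _
  exact hq (q.edges_toPath_subset_edges (congrArg Subtype.val this ▸ he))

theorem IsTree.deleteEdges_sup_edge (hT : T.IsTree)
    (hab : ¬(T.deleteEdges {s(u, v)}).Reachable a b) :
    (T.deleteEdges {s(u, v)} ⊔ edge a b).IsTree := by
  set D := T.deleteEdges {s(u, v)}
  have hDT' : D ≤ D ⊔ edge a b := le_sup_left
  have hne : a ≠ b := by
    rintro rfl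
    exact hab .rfl
  have hab' : (D ⊔ edge a b).Reachable a b := Adj.reachable (Or.inr (by simpa [edge_adj]))
  have hreach_u_or_v : ∀ x, (D ⊔ edge a b).Reachable x u ∨ (D ⊔ edge a b).Reachable x v := fun x =>
    ((hT.connected.preconnected x u).deleteEdges_reachable_or).imp (·.mono hDT') (·.mono hDT')
  have huv : (D ⊔ edge a b).Reachable u v := by
    rcases (hT.connected.preconnected a u).deleteEdges_reachable_or with hau | hav <;>
      rcases (hT.connected.preconnected b u).deleteEdges_reachable_or with hbu | hbv
    · exact absurd (hau.trans hbu.symm) hab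
    · exact ((hau.mono hDT').symm.trans hab').trans (hbv.mono hDT')
    · exact (hbu.mono hDT').symm.trans (hab'.symm.trans (hav.mono hDT'))
    · exact absurd (hav.trans hbv.symm) hab
  refine ⟨(connected_iff_exists_forall_reachable _).2 ⟨u, fun x => ?_⟩, ?_⟩
  · rcases hreach_u_or_v x with hx | hx
    · exact hx.symm
    · exact huv.trans hx.symm
  · exact (hT.isAcyclic.anti (deleteEdges_le _)).sup_edge_of_not_reachable hab

end SimpleGraph

namespace MSTPaper

open SimpleGraph

section Lengths

variable [MetricSpace M] {G T : SimpleGraph M}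

@[simp]
theorem edgeLen_mk (x y : M) : edgeLen s(x, y) = edist x y := rfl

theorem setDist_le_edist {A B : Set M} {x y : M} (hx : x ∈ A) (hy : y ∈ B) :
    setDist A B ≤ edist x y :=
  (biInf_le _ hx).trans (biInf_le _ hy)

theorem graphLen_deleteEdges_add {e : Sym2 M} (he : e ∈ G.edgeSet) :
    graphLen (G.deleteEdges {e}) + edgeLen e = graphLen G := by
  have hsplit : G.edgeSet = (G.edgeSet \ {e}) ∪ {e} := (Set.sdiff_union_of_subset (by simpa)).symm
  rw [graphLen, graphLen, edgeSet_deleteEdges, tsum_congr_set_coe _ hsplit,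
    ENNReal.summable.tsum_union_disjoint Set.disjoint_sdiff_left ENNReal.summable, tsum_singleton]

theorem graphLen_sup_edge_le (G : SimpleGraph M) (a b : M) :
    graphLen (G ⊔ edge a b) ≤ graphLen G + edist a b := by
  calc graphLen (G ⊔ edge a b)
      ≤ graphLen G + ∑' e : ({s(a, b)} : Set (Sym2 M)), edgeLen (e : Sym2 M) := by
        rw [graphLen, edgeSet_sup]
        grw [ENNReal.tsum_union_le, ENNReal.tsum_mono_subtype _ edgeSet_edge_subset]
        rfl
    _ = graphLen G + edist a b := by rw [tsum_singleton, edgeLen_mk]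

theorem finite_setOf_le_edgeLen (hG : graphLen G ≠ ⊤) {δ : ℝ≥0∞} (hδ : δ ≠ 0) :
    {e ∈ G.edgeSet | δ ≤ edgeLen e}.Finite := by
  refine ((ENNReal.finite_const_le_of_tsum_ne_top hG hδ).image Subtype.val).subset ?_
  rintro e ⟨he, hle⟩
  exact ⟨⟨e, he⟩, hle, rfl⟩

end Lengths

section MST

variable [MetricSpace M] {T : SimpleGraph M}

theorem IsMST.edist_le_of_not_reachable_deleteEdges (hT : IsMST T) {u v a b : M}
    (huv : T.Adj u v) (hab : ¬(T.deleteEdges {s(u, v)}).Reachable a b) :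
    edist u v ≤ edist a b := by
  have hsplit := graphLen_deleteEdges_add (T.mem_edgeSet.mpr huv)
  rw [edgeLen_mk] at hsplit
  have hfin : graphLen (T.deleteEdges {s(u, v)}) ≠ ⊤ :=
    ne_top_of_le_ne_top hT.2.1.ne (hsplit ▸ le_self_add)
  refine (ENNReal.add_le_add_iff_left hfin).1 ?_
  calc _ = graphLen T := hsplit
    _ ≤ graphLen (T.deleteEdges {s(u, v)} ⊔ edge a b) := hT.2.2 _ (hT.1.deleteEdges_sup_edge hab)
    _ ≤ _ := graphLen_sup_edge_le _ a b

theorem IsMST.exists_adj_edist_le (hT : IsMST T) {S : Set M} {a b : M} (ha : a ∈ S)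
    (hb : b ∉ S) : ∃ u ∈ S, ∃ v ∉ S, T.Adj u v ∧ edist u v ≤ edist a b := by
  obtain ⟨p, hp⟩ := hT.1.connected.preconnected.exists_isPath a b
  obtain ⟨d, hd, hu, hv⟩ := p.exists_boundary_dart S ha hb
  have hmem : s(d.fst, d.snd) ∈ p.edges := List.mem_map_of_mem hd
  exact ⟨d.fst, hu, d.snd, hv, d.adj, hT.edist_le_of_not_reachable_deleteEdges d.adj
    (hT.1.isAcyclic.not_reachable_deleteEdges_of_mem_edges hp hmem)⟩

theorem IsMST.exists_edist_eq_setDist_compl (hT : IsMST T) {S : Set M} (hS : S.Nonempty)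
    (hSc : Sᶜ.Nonempty) (hpos : 0 < setDist S Sᶜ) :
    ∃ u ∈ S, ∃ v ∈ Sᶜ, edist u v = setDist S Sᶜ := by
  set F := {e ∈ T.edgeSet | ∃ u ∈ S, ∃ v ∈ Sᶜ, e = s(u, v)}
  have hF_fin : F.Finite := by
    refine (finite_setOf_le_edgeLen hT.2.1.ne hpos.ne').subset ?_
    rintro _ ⟨he, u, hu, v, hv, rfl⟩
    exact ⟨he, setDist_le_edist hu hv⟩
  have hF_ne : F.Nonempty := by
    obtain ⟨u, hu, v, hv, huv, -⟩ := hT.exists_adj_edist_le hS.some_mem hSc.some_mem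
    exact ⟨_, huv, u, hu, v, hv, rfl⟩
  obtain ⟨_, ⟨-, u, hu, v, hv, rfl⟩, hmin⟩ := F.exists_min_image edgeLen hF_fin hF_ne
  refine ⟨u, hu, v, hv, le_antisymm ?_ (setDist_le_edist hu hv)⟩
  refine le_iInf₂ fun a ha => le_iInf₂ fun b hb => ?_
  obtain ⟨u', hu', v', hv', huv', hle⟩ := hT.exists_adj_edist_le ha hb
  exact (hmin _ ⟨huv', u', hu', v', hv', rfl⟩).trans hle

end MST

/-- If a minimal spanning tree exists, then the distance between the parts of any
partition of `M` with positive distance is attained. -/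
theorem dist_attained_of_mst [MetricSpace M] (h : ∃ T : SimpleGraph M, IsMST T)
    (M₁ M₂ : Set M) (hdisj : Disjoint M₁ M₂) (hunion : M₁ ∪ M₂ = Set.univ)
    (h₁ : M₁.Nonempty) (h₂ : M₂.Nonempty) (hpos : 0 < setDist M₁ M₂) :
    ∃ v₁ ∈ M₁, ∃ v₂ ∈ M₂, edist v₁ v₂ = setDist M₁ M₂ := by
  obtain ⟨T, hT⟩ := h
  obtain rfl : M₁ᶜ = M₂ := (IsCompl.of_eq hdisj.eq_bot hunion).compl_eq
  exact hT.exists_edist_eq_setDist_compl h₁ h₂ hpos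

end MSTPaper
end

section
/- Let T = (M, E) be a minimal spanning tree on a metric space (M, ρ), and let v ∈ M. Then v has infinite degree in T if and only if inf{ρ(v, w) : w ∈ M, w ≠ v} = 0. -/
/-!
Every edge at `v` has length at least `c = inf {ρ(v, w) : w ≠ v}`, so if `c > 0` a vertex of
infinite degree forces infinite total length. Conversely, let `vu` be the first edge of the path
from `v` to some `w ≠ v`; replacing `vu` by `vw` gives another spanning tree, so minimality yields
`ρ(v, u) ≤ ρ(v, w)`. Hence if `v` has finite degree, `c` is at least the length of the shortest
edge at `v`, which is positive.
-/

open scoped ENNReal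

namespace SimpleGraph

variable {V : Type*} {G : SimpleGraph V}

lemma reachable_of_reachable_sup_edge {a b x y : V} (hab : G.Reachable a b)
    (h : (G ⊔ edge a b).Reachable x y) : G.Reachable x y := by
  obtain ⟨p⟩ := h
  induction p with
  | nil => rfl
  | cons hadj _ ih =>
    refine .trans ?_ ih
    rcases hadj with hadj | hadj
    · exact hadj.reachable
    · obtain ⟨⟨rfl, rfl⟩ | ⟨rfl, rfl⟩, -⟩ := (edge_adj ..).mp hadj
      exacts [hab, hab.symm]

lemma Reachable.exists_adj_reachable_deleteEdges {v w : V} (h : G.Reachable v w) (hvw : v ≠ w) :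
    ∃ u, G.Adj v u ∧ (G.deleteEdges {s(v, u)}).Reachable u w := by
  obtain ⟨p, hp⟩ := h.exists_isPath
  cases p with
  | nil => exact absurd rfl hvw
  | @cons _ u _ hvu q =>
    rw [Walk.cons_isPath_iff] at hp
    refine ⟨u, hvu, ⟨q.toDeleteEdges _ fun e he hmem => hp.2 ?_⟩⟩
    rw [Set.mem_singleton_iff] at hmem
    exact q.fst_mem_support_of_mem_edges (hmem ▸ he)

lemma incidenceSet_infinite_iff (v : V) :
    (G.incidenceSet v).Infinite ↔ (G.neighborSet v).Infinite := by
  classical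
  exact Set.infinite_coe_iff.symm.trans
    ((G.incidenceSetEquivNeighborSet v).infinite_iff.trans Set.infinite_coe_iff)

lemma Connected.of_sup_edge {a b : V} (h : (G ⊔ edge a b).Connected) (hab : G.Reachable a b) :
    G.Connected where
  preconnected x y := reachable_of_reachable_sup_edge hab (h.preconnected x y)
  nonempty := h.nonempty

lemma IsTree.not_reachable_deleteEdges {T : SimpleGraph V} (hT : T.IsTree) {u v w : V}
    (hvu : T.Adj v u) (huw : (T.deleteEdges {s(v, u)}).Reachable u w) :
    ¬ (T.deleteEdges {s(v, u)}).Reachable v w := fun hvw =>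
  isBridge_iff.mp (isAcyclic_iff_forall_adj_isBridge.mp hT.isAcyclic hvu) (hvw.trans huw.symm)

lemma IsTree.deleteEdges_sup_edge_s13 {T : SimpleGraph V} (hT : T.IsTree) {u v w : V} (hvu : T.Adj v u)
    (huw : (T.deleteEdges {s(v, u)}).Reachable u w) :
    (T.deleteEdges {s(v, u)} ⊔ edge v w).IsTree := by
  set E := T.deleteEdges {s(v, u)}
  have hvw : ¬ E.Reachable v w := hT.not_reachable_deleteEdges hvu huw
  refine ⟨?_, (hT.isAcyclic.anti (deleteEdges_le _)).sup_edge_of_not_reachable hvw⟩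
  have hT_le : T ≤ E ⊔ edge v w ⊔ edge v u :=
    (sdiff_sup_cancel ((edge_le_iff T).mpr (.inr hvu))).ge.trans (sup_le_sup_right le_sup_left _)
  have hadj : (E ⊔ edge v w).Adj v w :=
    Or.inr ((edge_adj ..).mpr ⟨Or.inl ⟨rfl, rfl⟩, fun h => hvw (h ▸ .rfl)⟩)
  exact (hT.connected.mono hT_le).of_sup_edge (hadj.reachable.trans (huw.symm.mono le_sup_left))

end SimpleGraph

namespace MSTPaper

open SimpleGraph

variable {M : Type*}

section

variable [MetricSpace M]

lemma graphLen_eq_edgeLen_add {G : SimpleGraph M} {e : Sym2 M} (he : e ∈ G.edgeSet) :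
    graphLen G = edgeLen e + graphLen (G.deleteEdges {e}) := by
  rw [graphLen, graphLen, edgeSet_deleteEdges, ← tsum_singleton e edgeLen,
    ← ENNReal.summable.tsum_union_disjoint Set.disjoint_sdiff_right ENNReal.summable,
    Set.union_sdiff_cancel (Set.singleton_subset_iff.mpr he)]

lemma graphLen_sup_edge {G : SimpleGraph M} {v w : M} (hvw : v ≠ w) (hG : ¬ G.Adj v w) :
    graphLen (G ⊔ edge v w) = edist v w + graphLen G := by
  have hmem : s(v, w) ∈ (G ⊔ edge v w).edgeSet :=
    Or.inr ((edge_adj ..).mpr ⟨.inl ⟨rfl, rfl⟩, hvw⟩)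
  rw [graphLen_eq_edgeLen_add hmem, deleteEdges_sup, deleteEdges_edge (Set.mem_singleton _),
    sup_bot_eq, deleteEdges_eq_self.mpr (Set.disjoint_singleton_right.mpr hG)]
  rfl

lemma tsum_edist_neighborSet_le_graphLen (G : SimpleGraph M) (v : M) :
    ∑' u : G.neighborSet v, edist v u ≤ graphLen G :=
  ENNReal.tsum_comp_le_tsum_of_injective
    (f := fun u : G.neighborSet v => (⟨s(v, u), u.2⟩ : G.edgeSet))
    (fun _ _ h => Subtype.ext (Sym2.congr_right.mp (congrArg Subtype.val h))) _

lemma IsMST.edist_le_of_reachable_deleteEdges {T : SimpleGraph M} (hT : IsMST T) {u v w : M}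
    (hvu : T.Adj v u) (huw : (T.deleteEdges {s(v, u)}).Reachable u w) :
    edist v u ≤ edist v w := by
  set E := T.deleteEdges {s(v, u)}
  have hvw : ¬ E.Reachable v w := hT.1.not_reachable_deleteEdges hvu huw
  have hT_len : graphLen T = edist v u + graphLen E :=
    graphLen_eq_edgeLen_add (e := s(v, u)) hvu
  have hT'_len : graphLen (E ⊔ edge v w) = edist v w + graphLen E :=
    graphLen_sup_edge (fun h => hvw (h ▸ .rfl)) fun h => hvw h.reachable
  have hE_ne_top : graphLen E ≠ ⊤ :=
    ne_top_of_le_ne_top hT.2.1.ne (hT_len ▸ le_add_self)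
  rw [← ENNReal.add_le_add_iff_right hE_ne_top, ← hT_len, ← hT'_len]
  exact hT.2.2 _ (hT.1.deleteEdges_sup_edge_s13 hvu huw)

lemma IsMST.exists_adj_edist_le_s13 {T : SimpleGraph M} (hT : IsMST T) {v w : M} (hvw : v ≠ w) :
    ∃ u, T.Adj v u ∧ edist v u ≤ edist v w :=
  have ⟨u, hvu, huw⟩ := (hT.1.connected.preconnected v w).exists_adj_reachable_deleteEdges hvw
  ⟨u, hvu, hT.edist_le_of_reachable_deleteEdges hvu huw⟩

lemma iInf_edist_eq_zero_of_neighborSet_infinite {G : SimpleGraph M} (hG : graphLen G ≠ ⊤)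
    {v : M} (hv : (G.neighborSet v).Infinite) : (⨅ (w : M) (_ : w ≠ v), edist v w) = 0 := by
  by_contra hpos
  have : Infinite (G.neighborSet v) := hv.to_subtype
  refine hG (top_le_iff.mp ?_)
  calc ⊤ = ∑' _ : G.neighborSet v, ⨅ (w : M) (_ : w ≠ v), edist v w :=
        (ENNReal.tsum_const_eq_top_of_ne_zero hpos).symm
    _ ≤ ∑' u : G.neighborSet v, edist v u :=
        ENNReal.tsum_le_tsum fun u => iInf₂_le (u : M) (G.ne_of_adj u.2).symm
    _ ≤ graphLen G := tsum_edist_neighborSet_le_graphLen G v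

lemma IsMST.neighborSet_infinite_of_iInf_edist_eq_zero {T : SimpleGraph M} (hT : IsMST T) {v : M}
    (hv : (⨅ (w : M) (_ : w ≠ v), edist v w) = 0) : (T.neighborSet v).Infinite := by
  intro hfin
  set ε := hfin.toFinset.inf (edist v)
  have hε_pos : 0 < ε := (Finset.lt_inf_iff ENNReal.zero_lt_top).mpr fun u hu =>
    edist_pos.mpr (T.ne_of_adj (hfin.mem_toFinset.mp hu))
  have hε_le : ε ≤ ⨅ (w : M) (_ : w ≠ v), edist v w := le_iInf₂ fun w hwv =>
    have ⟨u, hvu, hle⟩ := hT.exists_adj_edist_le_s13 hwv.symm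
    (Finset.inf_le (hfin.mem_toFinset.mpr hvu)).trans hle
  exact hε_pos.not_ge (hv ▸ hε_le)

end

/-- A vertex of a minimal spanning tree has infinite degree iff the infimum of
distances from it to the other points is zero. -/
theorem mst_infinite_degree_iff [MetricSpace M] (T : SimpleGraph M) (hT : IsMST T)
    (v : M) :
    (T.incidenceSet v).Infinite ↔ (⨅ (w : M) (_ : w ≠ v), edist v w) = 0 := by
  rw [incidenceSet_infinite_iff]
  exact ⟨iInf_edist_eq_zero_of_neighborSet_infinite hT.2.1.ne,
    hT.neighborSet_infinite_of_iInf_edist_eq_zero⟩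

end MSTPaper
end
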